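/- arXiv:2402.03159 — 4 statements merged into one kernel-verified Lean document; each statement's English description precedes it below -/
import Mathlib

section
/- For a density matrix ρ and a Hermitian matrix A, the Wigner-Yanase skew information I_ρ(A) = (1/2)Tr([√ρ, A]†[√ρ, A]) is nonnegative and bounded above by the variance V_ρ(A) = Tr(A²ρ) − (Tr(Aρ))². -/
/-!
Write `s = √ρ`. Expanding the commutator gives `I_ρ(A) = Tr(A²ρ) - Tr(sAsA)`, so the upper
bound amounts to `(Tr Aρ)² ≤ Tr(sAsA)`. For the Hermitian matrix `M = √s A √s` one has
`Tr(sAsA) = Tr(M²)` and `Tr(Aρ) = Tr(sM)`, while `Tr(s²) = Tr ρ = 1`, so this is the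
Cauchy–Schwarz inequality for the Hilbert–Schmidt inner product.
Nonnegativity is `Tr(XᴴX) ≥ 0`.
-/

open Matrix
open scoped ComplexOrder

/-- The old Mathlib `Matrix.PosSemidef.sqrt` (removed upstream), with its original definition. -/
noncomputable def Matrix.PosSemidef.sqrt {n 𝕜 : Type*} [Fintype n] [DecidableEq n] [RCLike 𝕜]
    {A : Matrix n n 𝕜} (hA : A.PosSemidef) : Matrix n n 𝕜 :=
  (hA.1.eigenvectorUnitary : Matrix n n 𝕜) *
    diagonal (fun i => ((Real.sqrt (hA.1.eigenvalues i) : ℝ) : 𝕜)) *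
    (star hA.1.eigenvectorUnitary : Matrix n n 𝕜)

namespace Matrix

variable {n 𝕜 : Type*} [Fintype n] [RCLike 𝕜]

lemma IsHermitian.sq_trace_mul_le_trace_mul_self {s M : Matrix n n 𝕜} (hs : s.IsHermitian)
    (hM : M.IsHermitian) (hss : (s * s).trace = 1) : (s * M).trace ^ 2 ≤ (M * M).trace := by
  set t := (s * M).trace
  -- Expand `0 ≤ Tr((M - t • s)ᴴ (M - t • s))`; no need to know beforehand that `t` is real.
  have hX : (M - t • s)ᴴ * (M - t • s) =
      M * M - t • (M * s) - star t • (s * M) + (t * star t) • (s * s) := by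
    rw [conjTranspose_sub, conjTranspose_smul, hs.eq, hM.eq]
    simp only [sub_mul, mul_sub, smul_mul_assoc, mul_smul_comm, smul_sub, smul_smul]
    abel
  have h := (posSemidef_conjTranspose_mul_self (M - t • s)).trace_nonneg
  rw [hX, trace_add, trace_sub, trace_sub, trace_smul, trace_smul, trace_smul,
    trace_mul_comm M s, hss] at h
  simp only [smul_eq_mul] at h
  rw [← sub_nonneg]
  convert h using 1
  ring

variable [DecidableEq n]

lemma PosSemidef.posSemidef_sqrt {A : Matrix n n 𝕜} (hA : A.PosSemidef) :
    hA.sqrt.PosSemidef := by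
  rw [PosSemidef.sqrt, star_eq_conjTranspose]
  refine PosSemidef.mul_mul_conjTranspose_same (posSemidef_diagonal_iff.mpr fun i => ?_) _
  exact_mod_cast Real.sqrt_nonneg _

lemma PosSemidef.sqrt_mul_self {A : Matrix n n 𝕜} (hA : A.PosSemidef) :
    hA.sqrt * hA.sqrt = A := by
  set U : Matrix n n 𝕜 := (hA.1.eigenvectorUnitary : Matrix n n 𝕜)
  set D : Matrix n n 𝕜 := diagonal fun i => ((Real.sqrt (hA.1.eigenvalues i) : ℝ) : 𝕜)
  have hUU : star U * U = 1 := Unitary.coe_star_mul_self _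
  have hDD : D * D = diagonal (RCLike.ofReal ∘ hA.1.eigenvalues) := by
    rw [diagonal_mul_diagonal]
    congr 1
    funext i
    rw [Function.comp_apply, ← RCLike.ofReal_mul, Real.mul_self_sqrt (hA.eigenvalues_nonneg i)]
  calc hA.sqrt * hA.sqrt = U * (D * (star U * U) * D) * star U := by
        simp only [PosSemidef.sqrt, U, D, Matrix.mul_assoc]
    _ = A := by
        rw [hUU, Matrix.mul_one, hDD]
        conv_rhs => rw [hA.1.spectral_theorem, Unitary.conjStarAlgAut_apply]

lemma trace_conjTranspose_commutator_mul_commutator {s A : Matrix n n 𝕜} (hs : s.IsHermitian)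
    (hA : A.IsHermitian) :
    ((s * A - A * s)ᴴ * (s * A - A * s)).trace =
      2 * (A ^ 2 * (s * s)).trace - 2 * (s * A * (s * A)).trace := by
  have hC : (s * A - A * s)ᴴ = A * s - s * A := by
    rw [conjTranspose_sub, conjTranspose_mul, conjTranspose_mul, hs.eq, hA.eq]
  have hAssA : (A * s * (s * A)).trace = (A ^ 2 * (s * s)).trace := by
    rw [show A * s * (s * A) = A * (s * s) * A by simp only [Matrix.mul_assoc], trace_mul_comm,
      pow_two]
    simp only [Matrix.mul_assoc]
  have hAsAs : (A * s * (A * s)).trace = (s * A * (s * A)).trace := by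
    rw [show A * s * (A * s) = A * (s * A * s) by simp only [Matrix.mul_assoc], trace_mul_comm]
    simp only [Matrix.mul_assoc]
  rw [hC, sub_mul, mul_sub, mul_sub, trace_sub, trace_sub, trace_sub, hAssA, hAsAs,
    trace_mul_comm (s * A) (A * s), hAssA]
  ring

lemma PosSemidef.sq_trace_mul_mul_self_le {s A : Matrix n n 𝕜} (hs : s.PosSemidef)
    (hA : A.IsHermitian) (hss : (s * s).trace = 1) :
    (A * (s * s)).trace ^ 2 ≤ (s * A * (s * A)).trace := by
  set q := hs.sqrt
  have hq : q.IsHermitian := hs.posSemidef_sqrt.1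
  have hqq : q * q = s := hs.sqrt_mul_self
  have hM : (q * A * q).IsHermitian := by
    simpa only [hq.eq, Matrix.mul_assoc] using isHermitian_mul_mul_conjTranspose q hA
  have hsM : (s * (q * A * q)).trace = (A * (s * s)).trace := by
    calc (s * (q * A * q)).trace = (q * (s * q * A)).trace := by
          rw [← trace_mul_comm (s * q * A) q]; simp only [Matrix.mul_assoc]
      _ = (s * s * A).trace := by rw [← hqq]; simp only [Matrix.mul_assoc]
      _ = (A * (s * s)).trace := trace_mul_comm _ _
  have hMM : (q * A * q * (q * A * q)).trace = (s * A * (s * A)).trace := by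
    calc (q * A * q * (q * A * q)).trace = (q * (A * s * A * q)).trace := by
          rw [← hqq]; simp only [Matrix.mul_assoc]
      _ = (A * (s * (A * s))).trace := by
          rw [trace_mul_comm]; simp only [Matrix.mul_assoc, hqq]
      _ = (s * A * (s * A)).trace := by rw [trace_mul_comm]; simp only [Matrix.mul_assoc]
  simpa only [hsM, hMM] using hs.1.sq_trace_mul_le_trace_mul_self hM hss

end Matrix

theorem stmt1 {d : ℕ} (ρ A : Matrix (Fin d) (Fin d) ℂ)
    (hρ : ρ.PosSemidef) (htr : ρ.trace = 1) (hA : A.IsHermitian) :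
    (0 : ℂ) ≤
        (1 / 2 : ℂ) * ((hρ.sqrt * A - A * hρ.sqrt)ᴴ * (hρ.sqrt * A - A * hρ.sqrt)).trace ∧
      (1 / 2 : ℂ) * ((hρ.sqrt * A - A * hρ.sqrt)ᴴ * (hρ.sqrt * A - A * hρ.sqrt)).trace ≤
        (A ^ 2 * ρ).trace - ((A * ρ).trace) ^ 2 := by
  refine ⟨mul_nonneg one_half_pos.le (posSemidef_conjTranspose_mul_self _).trace_nonneg, ?_⟩
  have hs := hρ.posSemidef_sqrt
  have hss := hρ.sqrt_mul_self
  have hcs : (A * ρ).trace ^ 2 ≤ (hρ.sqrt * A * (hρ.sqrt * A)).trace := by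
    simpa only [hss] using hs.sq_trace_mul_mul_self_le hA (by rw [hss, htr])
  rw [trace_conjTranspose_commutator_mul_commutator hs.1 hA, hss]
  calc (1 / 2 : ℂ) * (2 * (A ^ 2 * ρ).trace - 2 * (hρ.sqrt * A * (hρ.sqrt * A)).trace)
      = (A ^ 2 * ρ).trace - (hρ.sqrt * A * (hρ.sqrt * A)).trace := by ring
    _ ≤ (A ^ 2 * ρ).trace - ((A * ρ).trace) ^ 2 := sub_le_sub_left hcs _
end

section
/- The Wigner-Yanase-Dyson skew information is additive under tensor products: for density matrices ρ₁ on H₁ and ρ₂ on H₂ and Hermitian matrices A₁ on H₁, A₂ on H₂, I^s_{ρ₁⊗ρ₂}(A₁⊗I + I⊗A₂) = I^s_{ρ₁}(A₁) + I^s_{ρ₂}(A₂). -/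
open Matrix Kronecker
open scoped ComplexOrder

/-- Real power of a Hermitian matrix via its spectral decomposition
(junk value `0` for non-Hermitian input). -/
noncomputable def mpow {n : Type*} [Fintype n] [DecidableEq n]
    (ρ : Matrix n n ℂ) (s : ℝ) : Matrix n n ℂ :=
  if h : ρ.IsHermitian then
    (h.eigenvectorUnitary : Matrix n n ℂ) *
      Matrix.diagonal (fun i => ((h.eigenvalues i ^ s : ℝ) : ℂ)) *
      (star h.eigenvectorUnitary : Matrix n n ℂ)
  else 0

/-- Wigner-Yanase-Dyson skew information `I^s_ρ(A) = Tr(A²ρ) − Tr(ρ^{1−s} A ρ^s A)`. -/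
noncomputable def skewInfo {n : Type*} [Fintype n] [DecidableEq n]
    (ρ A : Matrix n n ℂ) (s : ℝ) : ℂ :=
  (A ^ 2 * ρ).trace - (mpow ρ (1 - s) * A * mpow ρ s * A).trace

section aux

variable {n : Type*} [Fintype n] [DecidableEq n]

/-- `mpow` is well-defined: any unitary diagonalization computes it. -/
lemma mpow_eq_spec (ρ : Matrix n n ℂ) (h : ρ.IsHermitian)
    (V : Matrix n n ℂ) (hV : V ∈ Matrix.unitaryGroup n ℂ) (f : n → ℝ)
    (hρ : ρ = V * Matrix.diagonal (fun i => ((f i : ℝ) : ℂ)) * star V) (s : ℝ) :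
    mpow ρ s = V * Matrix.diagonal (fun i => ((f i ^ s : ℝ) : ℂ)) * star V := by
  set U : Matrix n n ℂ := (h.eigenvectorUnitary : Matrix n n ℂ) with hU
  have hU1 : star U * U = 1 := (Matrix.mem_unitaryGroup_iff'.mp h.eigenvectorUnitary.2)
  have hU2 : U * star U = 1 := (Matrix.mem_unitaryGroup_iff.mp h.eigenvectorUnitary.2)
  have hV1 : star V * V = 1 := (Matrix.mem_unitaryGroup_iff'.mp hV)
  have hV2 : V * star V = 1 := (Matrix.mem_unitaryGroup_iff.mp hV)
  set lam := h.eigenvalues with hlam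
  set D : Matrix n n ℂ := Matrix.diagonal (fun i => ((lam i : ℝ) : ℂ)) with hD
  set E : Matrix n n ℂ := Matrix.diagonal (fun i => ((f i : ℝ) : ℂ)) with hE
  set W : Matrix n n ℂ := star U * V with hW
  have e1 : U * D * star U = V * E * star V := by
    rw [← hρ]
    exact (h.spectral_theorem).symm
  have key : D * W = W * E := by
    calc D * W = (star U * U) * D * (star U * V) := by rw [hU1, one_mul]
      _ = star U * (U * D * star U) * V := by simp only [Matrix.mul_assoc]
      _ = star U * (V * E * star V) * V := by rw [e1]
      _ = (star U * V) * E * (star V * V) := by simp only [Matrix.mul_assoc]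
      _ = W * E := by rw [hV1, Matrix.mul_one]
  have hWe : ∀ i j, ((lam i : ℝ) : ℂ) * W i j = W i j * ((f j : ℝ) : ℂ) := by
    intro i j
    have := congrFun (congrFun key i) j
    simpa [hD, hE, Matrix.diagonal_mul, Matrix.mul_diagonal] using this
  have key2 : Matrix.diagonal (fun i => ((lam i ^ s : ℝ) : ℂ)) * W
      = W * Matrix.diagonal (fun i => ((f i ^ s : ℝ) : ℂ)) := by
    ext i j
    simp only [Matrix.diagonal_mul, Matrix.mul_diagonal]
    rcases eq_or_ne (W i j) 0 with h0 | h0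
    · simp [h0]
    · have hfl : (lam i : ℂ) = (f j : ℂ) := by
        have := hWe i j
        rw [mul_comm (W i j) _] at this
        exact mul_right_cancel₀ h0 this
      have : lam i = f j := by exact_mod_cast hfl
      rw [this, mul_comm]
  rw [mpow, dif_pos h]
  calc U * Matrix.diagonal (fun i => ((lam i ^ s : ℝ) : ℂ)) * star U
      = U * Matrix.diagonal (fun i => ((lam i ^ s : ℝ) : ℂ)) * star U * (V * star V) := by
        rw [hV2, Matrix.mul_one]
    _ = U * (Matrix.diagonal (fun i => ((lam i ^ s : ℝ) : ℂ)) * W) * star V := by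
        simp only [hW, Matrix.mul_assoc]
    _ = U * (W * Matrix.diagonal (fun i => ((f i ^ s : ℝ) : ℂ))) * star V := by rw [key2]
    _ = (U * star U) * (V * Matrix.diagonal (fun i => ((f i ^ s : ℝ) : ℂ)) * star V) := by
        simp only [hW, Matrix.mul_assoc]
    _ = V * Matrix.diagonal (fun i => ((f i ^ s : ℝ) : ℂ)) * star V := by
        rw [hU2, Matrix.one_mul]

lemma isHermitian_kronecker {m : Type*} [Fintype m] [DecidableEq m]
    {A : Matrix n n ℂ} {B : Matrix m m ℂ} (hA : A.IsHermitian) (hB : B.IsHermitian) :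
    (A ⊗ₖ B).IsHermitian := by
  have : star (A ⊗ₖ B) = star A ⊗ₖ star B := by
    ext ⟨i, j⟩ ⟨k, l⟩
    simp [Matrix.star_apply, Matrix.kronecker_apply, mul_comm]
  rw [Matrix.IsHermitian, ← Matrix.star_eq_conjTranspose, this,
    Matrix.star_eq_conjTranspose, Matrix.star_eq_conjTranspose, hA.eq, hB.eq]

/-- `mpow` of a Kronecker product of positive semidefinite matrices. -/
lemma mpow_kronecker {m : Type*} [Fintype m] [DecidableEq m]
    {ρ₁ : Matrix n n ℂ} {ρ₂ : Matrix m m ℂ}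
    (h₁ : ρ₁.PosSemidef) (h₂ : ρ₂.PosSemidef) (s : ℝ) :
    mpow (ρ₁ ⊗ₖ ρ₂) s = mpow ρ₁ s ⊗ₖ mpow ρ₂ s := by
  have hh₁ := h₁.1
  have hh₂ := h₂.1
  set U₁ : Matrix n n ℂ := (hh₁.eigenvectorUnitary : Matrix n n ℂ)
  set U₂ : Matrix m m ℂ := (hh₂.eigenvectorUnitary : Matrix m m ℂ)
  have hkstar : ∀ (A : Matrix n n ℂ) (B : Matrix m m ℂ),
      star (A ⊗ₖ B) = star A ⊗ₖ star B := by
    intro A B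
    ext ⟨i, j⟩ ⟨k, l⟩
    simp [Matrix.star_apply, Matrix.kronecker_apply, mul_comm]
  have hUk : U₁ ⊗ₖ U₂ ∈ Matrix.unitaryGroup (n × m) ℂ := by
    rw [Matrix.mem_unitaryGroup_iff']
    rw [hkstar, ← Matrix.mul_kronecker_mul,
      Matrix.mem_unitaryGroup_iff'.mp hh₁.eigenvectorUnitary.2,
      Matrix.mem_unitaryGroup_iff'.mp hh₂.eigenvectorUnitary.2,
      Matrix.one_kronecker_one]
  have hherm := isHermitian_kronecker hh₁ hh₂
  have hsp₁ : ρ₁ = U₁ * Matrix.diagonal (fun i => ((hh₁.eigenvalues i : ℝ) : ℂ)) * star U₁ :=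
    hh₁.spectral_theorem
  have hsp₂ : ρ₂ = U₂ * Matrix.diagonal (fun i => ((hh₂.eigenvalues i : ℝ) : ℂ)) * star U₂ :=
    hh₂.spectral_theorem
  have hcast : (fun p : n × m => (((hh₁.eigenvalues p.1 * hh₂.eigenvalues p.2 : ℝ)) : ℂ))
      = fun p : n × m => ((hh₁.eigenvalues p.1 : ℝ) : ℂ) * ((hh₂.eigenvalues p.2 : ℝ) : ℂ) := by
    funext p; push_cast; ring
  have hdecomp : ρ₁ ⊗ₖ ρ₂ = (U₁ ⊗ₖ U₂) *
      Matrix.diagonal (fun p : n × m =>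
        (((hh₁.eigenvalues p.1 * hh₂.eigenvalues p.2 : ℝ) : ℂ))) * star (U₁ ⊗ₖ U₂) := by
    rw [hkstar, hcast,
      ← Matrix.diagonal_kronecker_diagonal (fun i => ((hh₁.eigenvalues i : ℝ) : ℂ))
        (fun j => ((hh₂.eigenvalues j : ℝ) : ℂ)),
      ← Matrix.mul_kronecker_mul, ← Matrix.mul_kronecker_mul, ← hsp₁, ← hsp₂]
  have hd : (fun p : n × m => (((hh₁.eigenvalues p.1 * hh₂.eigenvalues p.2) ^ s : ℝ) : ℂ))
      = fun p : n × m => ((hh₁.eigenvalues p.1 ^ s : ℝ) : ℂ) * ((hh₂.eigenvalues p.2 ^ s : ℝ) : ℂ) := by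
    funext p
    rw [Real.mul_rpow (h₁.eigenvalues_nonneg _) (h₂.eigenvalues_nonneg _)]
    push_cast; ring
  rw [mpow_eq_spec (ρ₁ ⊗ₖ ρ₂) hherm _ hUk _ hdecomp s,
    mpow_eq_spec ρ₁ hh₁ U₁ hh₁.eigenvectorUnitary.2 _ hsp₁ s,
    mpow_eq_spec ρ₂ hh₂ U₂ hh₂.eigenvectorUnitary.2 _ hsp₂ s,
    hkstar, hd,
    ← Matrix.diagonal_kronecker_diagonal (fun i => ((hh₁.eigenvalues i ^ s : ℝ) : ℂ))
      (fun j => ((hh₂.eigenvalues j ^ s : ℝ) : ℂ)),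
    ← Matrix.mul_kronecker_mul, ← Matrix.mul_kronecker_mul]

lemma mpow_mul_mpow {ρ : Matrix n n ℂ} (h : ρ.PosSemidef) {a b : ℝ}
    (ha : 0 < a) (hb : 0 < b) (hab : a + b = 1) : mpow ρ a * mpow ρ b = ρ := by
  have hh := h.1
  have hU1 : star (hh.eigenvectorUnitary : Matrix n n ℂ) * (hh.eigenvectorUnitary : Matrix n n ℂ)
      = 1 := Matrix.mem_unitaryGroup_iff'.mp hh.eigenvectorUnitary.2
  rw [mpow, dif_pos hh, mpow, dif_pos hh]
  set U : Matrix n n ℂ := (hh.eigenvectorUnitary : Matrix n n ℂ)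
  set Da : Matrix n n ℂ := Matrix.diagonal (fun i => ((hh.eigenvalues i ^ a : ℝ) : ℂ))
  set Db : Matrix n n ℂ := Matrix.diagonal (fun i => ((hh.eigenvalues i ^ b : ℝ) : ℂ))
  have hDab : Da * Db = Matrix.diagonal (fun i => ((hh.eigenvalues i : ℝ) : ℂ)) := by
    rw [Matrix.diagonal_mul_diagonal]
    have : (fun i => ((hh.eigenvalues i ^ a : ℝ) : ℂ) * ((hh.eigenvalues i ^ b : ℝ) : ℂ))
        = fun i => ((hh.eigenvalues i : ℝ) : ℂ) := by
      funext i
      rw [← Complex.ofReal_mul, ← Real.rpow_add' (h.eigenvalues_nonneg i)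
        (by rw [hab]; norm_num), hab, Real.rpow_one]
    rw [this]
  calc (U * Da * star U) * (U * Db * star U)
      = U * (Da * (star U * U) * Db) * star U := by simp only [Matrix.mul_assoc]
    _ = U * (Da * Db) * star U := by rw [hU1, Matrix.mul_one]
    _ = U * Matrix.diagonal (fun i => ((hh.eigenvalues i : ℝ) : ℂ)) * star U := by rw [hDab]
    _ = ρ := hh.spectral_theorem.symm

lemma trace_mpow_sandwich {ρ : Matrix n n ℂ} (h : ρ.PosSemidef) (A : Matrix n n ℂ)
    {a b : ℝ} (ha : 0 < a) (hb : 0 < b) (hab : a + b = 1) :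
    (mpow ρ a * A * mpow ρ b).trace = (ρ * A).trace := by
  rw [Matrix.trace_mul_cycle, mpow_mul_mpow h hb ha (by linarith)]

end aux

theorem stmt2 {d₁ d₂ : ℕ}
    (ρ₁ A₁ : Matrix (Fin d₁) (Fin d₁) ℂ) (ρ₂ A₂ : Matrix (Fin d₂) (Fin d₂) ℂ)
    (hρ₁ : ρ₁.PosSemidef) (htr₁ : ρ₁.trace = 1)
    (hρ₂ : ρ₂.PosSemidef) (htr₂ : ρ₂.trace = 1)
    (hA₁ : A₁.IsHermitian) (hA₂ : A₂.IsHermitian)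
    (s : ℝ) (hs0 : 0 < s) (hs1 : s < 1) :
    skewInfo (ρ₁ ⊗ₖ ρ₂) (A₁ ⊗ₖ (1 : Matrix (Fin d₂) (Fin d₂) ℂ) +
        (1 : Matrix (Fin d₁) (Fin d₁) ℂ) ⊗ₖ A₂) s =
      skewInfo ρ₁ A₁ s + skewInfo ρ₂ A₂ s := by
  have hh₁ := hρ₁.1
  have hh₂ := hρ₂.1
  set X₁ := mpow ρ₁ (1 - s) with hX₁
  set Y₁ := mpow ρ₁ s with hY₁
  set X₂ := mpow ρ₂ (1 - s) with hX₂
  set Y₂ := mpow ρ₂ s with hY₂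
  have hXY₁ : X₁ * Y₁ = ρ₁ := mpow_mul_mpow hρ₁ (by linarith) hs0 (by ring)
  have hXY₂ : X₂ * Y₂ = ρ₂ := mpow_mul_mpow hρ₂ (by linarith) hs0 (by ring)
  have hT₁ : (X₁ * A₁ * Y₁).trace = (ρ₁ * A₁).trace :=
    trace_mpow_sandwich hρ₁ A₁ (by linarith) hs0 (by ring)
  have hT₂ : (X₂ * A₂ * Y₂).trace = (ρ₂ * A₂).trace :=
    trace_mpow_sandwich hρ₂ A₂ (by linarith) hs0 (by ring)
  have lhs1 : ((A₁ ⊗ₖ (1 : Matrix (Fin d₂) (Fin d₂) ℂ) +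
        (1 : Matrix (Fin d₁) (Fin d₁) ℂ) ⊗ₖ A₂) ^ 2 * (ρ₁ ⊗ₖ ρ₂)).trace
      = (A₁ ^ 2 * ρ₁).trace + (A₁ * ρ₁).trace * (A₂ * ρ₂).trace
        + ((A₁ * ρ₁).trace * (A₂ * ρ₂).trace + (A₂ ^ 2 * ρ₂).trace) := by
    simp only [pow_two, Matrix.add_mul, Matrix.mul_add, ← Matrix.mul_kronecker_mul,
      Matrix.one_mul, Matrix.mul_one, Matrix.trace_add, Matrix.trace_kronecker,
      htr₁, htr₂, one_mul, mul_one]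
  have lhs2 : (mpow (ρ₁ ⊗ₖ ρ₂) (1 - s) * (A₁ ⊗ₖ (1 : Matrix (Fin d₂) (Fin d₂) ℂ) +
        (1 : Matrix (Fin d₁) (Fin d₁) ℂ) ⊗ₖ A₂) * mpow (ρ₁ ⊗ₖ ρ₂) s *
        (A₁ ⊗ₖ (1 : Matrix (Fin d₂) (Fin d₂) ℂ) +
        (1 : Matrix (Fin d₁) (Fin d₁) ℂ) ⊗ₖ A₂)).trace
      = (X₁ * A₁ * Y₁ * A₁).trace + (ρ₁ * A₁).trace * (ρ₂ * A₂).trace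
        + ((ρ₁ * A₁).trace * (ρ₂ * A₂).trace + (X₂ * A₂ * Y₂ * A₂).trace) := by
    rw [mpow_kronecker hρ₁ hρ₂, mpow_kronecker hρ₁ hρ₂]
    simp only [Matrix.mul_add, Matrix.add_mul, ← Matrix.mul_kronecker_mul,
      Matrix.one_mul, Matrix.mul_one, Matrix.trace_add, Matrix.trace_kronecker]
    rw [hXY₁, hXY₂, hT₁, hT₂, htr₁, htr₂]
    ring
  rw [skewInfo, skewInfo, skewInfo, lhs1, lhs2,
    Matrix.trace_mul_comm ρ₁ A₁, Matrix.trace_mul_comm ρ₂ A₂]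
  ring
end

section
/- For any two linear operators A, B on a finite-dimensional Hilbert space and any density matrix ρ, the sum of variances satisfies ⟨ΔA⟩²_ρ + ⟨ΔB⟩²_ρ = ±(1/2)⟨i([A†,B] + [A,B†])⟩_ρ + (1/2)⟨M∓†M∓ + N± N±†⟩_ρ, where M∓ = A ∓ iB − ⟨A ∓ iB⟩_ρ I and N± = A ± iB − ⟨A ± iB⟩_ρ I (with consistent choice of signs; both sign choices give valid identities). -/
open Matrix
open scoped ComplexOrder

/-!
Centring an operator `X` at its expectation `⟨X⟩ = Tr(Xρ)` lowers both `⟨X†X⟩` and `⟨XX†⟩` by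
`|⟨X⟩|²`. For purely imaginary `z` the cross terms of `(A - zB)†(A - zB) + (A + zB)(A + zB)†`
add up to `-z([A†,B] + [A,B†])`, and the parallelogram law gives
`|⟨A - zB⟩|² + |⟨A + zB⟩|² = 2|⟨A⟩|² + 2|z|²|⟨B⟩|²`; taking `z = ±i` yields the identity.
-/

/-- Variance of an arbitrary operator:
`⟨ΔA⟩²_ρ = Tr[ρ(A†A + AA†)/2] − |Tr(Aρ)|²`. -/
noncomputable def varGen {d : ℕ} (ρ A : Matrix (Fin d) (Fin d) ℂ) : ℂ :=
  (ρ * ((1 / 2 : ℂ) • (Aᴴ * A + A * Aᴴ))).trace - (‖(A * ρ).trace‖ : ℂ) ^ 2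

/-- Commutator of matrices. -/
noncomputable def mcomm {d : ℕ} (X Y : Matrix (Fin d) (Fin d) ℂ) :
    Matrix (Fin d) (Fin d) ℂ :=
  X * Y - Y * X

section Expectation

variable {n R : Type*} [Fintype n] [CommRing R] [StarRing R] {ρ : Matrix n n R}

lemma trace_conjTranspose_mul_of_isHermitian (hρ : ρ.IsHermitian) (X : Matrix n n R) :
    (Xᴴ * ρ).trace = star (X * ρ).trace := by
  rw [← trace_conjTranspose, conjTranspose_mul, hρ.eq, trace_mul_comm]

variable [DecidableEq n]

lemma trace_centered_conjTranspose_mul_self (hρ : ρ.IsHermitian) (htr : ρ.trace = 1)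
    (X : Matrix n n R) :
    ((X - (X * ρ).trace • 1)ᴴ * (X - (X * ρ).trace • 1) * ρ).trace =
      (Xᴴ * X * ρ).trace - (X * ρ).trace * star (X * ρ).trace := by
  simp only [conjTranspose_sub, conjTranspose_smul, conjTranspose_one, sub_mul, mul_sub,
    smul_mul, Matrix.mul_smul, Matrix.one_mul, Matrix.mul_one, trace_sub, trace_smul,
    smul_eq_mul, trace_conjTranspose_mul_of_isHermitian hρ, htr]
  ring

lemma trace_centered_mul_conjTranspose_self (hρ : ρ.IsHermitian) (htr : ρ.trace = 1)
    (X : Matrix n n R) :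
    ((X - (X * ρ).trace • 1) * (X - (X * ρ).trace • 1)ᴴ * ρ).trace =
      (X * Xᴴ * ρ).trace - (X * ρ).trace * star (X * ρ).trace := by
  simp only [conjTranspose_sub, conjTranspose_smul, conjTranspose_one, sub_mul, mul_sub,
    smul_mul, Matrix.mul_smul, Matrix.one_mul, Matrix.mul_one, trace_sub, trace_smul,
    smul_eq_mul, trace_conjTranspose_mul_of_isHermitian hρ, htr]
  ring

end Expectation

lemma conjTranspose_mul_sub_smul_add_mul_conjTranspose_add_smul {n R : Type*} [Fintype n]
    [CommRing R] [StarRing R] (A B : Matrix n n R) {z : R} (hz : star z = -z) :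
    (A - z • B)ᴴ * (A - z • B) + (A + z • B) * (A + z • B)ᴴ =
      Aᴴ * A + A * Aᴴ + (z * star z) • (Bᴴ * B + B * Bᴴ) -
        z • (Aᴴ * B - B * Aᴴ + (A * Bᴴ - Bᴴ * A)) := by
  simp only [conjTranspose_sub, conjTranspose_add, conjTranspose_smul, hz, sub_mul, add_mul,
    mul_sub, mul_add, smul_mul, Matrix.mul_smul]
  module

lemma varGen_eq_trace_sub_mul_star {d : ℕ} (ρ A : Matrix (Fin d) (Fin d) ℂ) :
    varGen ρ A = (1 / 2 : ℂ) * ((Aᴴ * A + A * Aᴴ) * ρ).trace -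
      (A * ρ).trace * star (A * ρ).trace := by
  rw [varGen, trace_mul_comm, smul_mul, trace_smul, smul_eq_mul, Complex.star_def,
    Complex.mul_conj']

theorem varGen_add_mul_varGen {d : ℕ} (ρ A B : Matrix (Fin d) (Fin d) ℂ)
    (hρ : ρ.IsHermitian) (htr : ρ.trace = 1) (z : ℂ) (hz : star z = -z) :
    let M : Matrix (Fin d) (Fin d) ℂ := A - z • B - (((A - z • B) * ρ).trace) • 1
    let N : Matrix (Fin d) (Fin d) ℂ := A + z • B - (((A + z • B) * ρ).trace) • 1
    varGen ρ A + z * star z * varGen ρ B =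
      (1 / 2 : ℂ) * ((z • (mcomm Aᴴ B + mcomm A Bᴴ)) * ρ).trace +
        (1 / 2 : ℂ) * ((Mᴴ * M + N * Nᴴ) * ρ).trace := by
  intro M N
  have hMN : ((Mᴴ * M + N * Nᴴ) * ρ).trace =
      (((A - z • B)ᴴ * (A - z • B) + (A + z • B) * (A + z • B)ᴴ) * ρ).trace -
        ((A - z • B) * ρ).trace * star ((A - z • B) * ρ).trace -
        ((A + z • B) * ρ).trace * star ((A + z • B) * ρ).trace := by
    rw [add_mul, trace_add, trace_centered_conjTranspose_mul_self hρ htr,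
      trace_centered_mul_conjTranspose_self hρ htr,
      Matrix.add_mul ((A - z • B)ᴴ * (A - z • B)), trace_add]
    ring
  rw [hMN, conjTranspose_mul_sub_smul_add_mul_conjTranspose_add_smul A B hz,
    varGen_eq_trace_sub_mul_star, varGen_eq_trace_sub_mul_star]
  simp only [mcomm, sub_mul, add_mul, smul_mul, trace_sub, trace_add, trace_smul, smul_eq_mul,
    star_sub, star_add, star_mul, hz]
  ring

/-- Sum uncertainty equality for arbitrary operators and mixed states; `e = 1`
corresponds to the upper choice of signs and `e = -1` to the lower one. -/
theorem stmt5 {d : ℕ} (ρ A B : Matrix (Fin d) (Fin d) ℂ)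
    (hρ : ρ.PosSemidef) (htr : ρ.trace = 1)
    (e : ℂ) (he : e = 1 ∨ e = -1) :
    let M : Matrix (Fin d) (Fin d) ℂ :=
      A - (e * Complex.I) • B - (((A - (e * Complex.I) • B) * ρ).trace) • 1
    let N : Matrix (Fin d) (Fin d) ℂ :=
      A + (e * Complex.I) • B - (((A + (e * Complex.I) • B) * ρ).trace) • 1
    varGen ρ A + varGen ρ B =
      e * (1 / 2 : ℂ) *
          ((Complex.I • (mcomm Aᴴ B + mcomm A Bᴴ)) * ρ).trace +
        (1 / 2 : ℂ) * ((Mᴴ * M + N * Nᴴ) * ρ).trace := by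
  have hz : star (e * Complex.I) = -(e * Complex.I) := by
    rcases he with rfl | rfl <;> simp
  have hz1 : e * Complex.I * star (e * Complex.I) = 1 := by
    rcases he with rfl | rfl <;> simp
  have key := varGen_add_mul_varGen ρ A B hρ.isHermitian htr (e * Complex.I) hz
  rw [hz1, one_mul] at key
  refine key.trans (congrArg (· + _) ?_)
  rw [mul_smul, smul_mul, smul_mul, trace_smul, trace_smul, smul_eq_mul, smul_eq_mul]
  ring
end

section
/- For Hermitian operators A, B and a density matrix ρ, the Robertson-Heisenberg uncertainty relation holds: ⟨ΔA⟩²_ρ ⟨ΔB⟩²_ρ ≥ [(1/(2i)) Tr([A,B]ρ)]² + [(1/2)Tr({A,B}ρ) − ⟨A⟩_ρ⟨B⟩_ρ]². -/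
/-!
For a density matrix `ρ`, `(X, Y) ↦ Tr(Y ρ Xᴴ)` is a positive semidefinite sesquilinear form on
matrices. Cauchy–Schwarz for it, applied to the centred observables `A - ⟨A⟩` and `B - ⟨B⟩`, gives
`|Cov(A, B)|² ≤ Var A · Var B` for the complex covariance `Cov(A, B) = Tr(ABρ) - ⟨A⟩⟨B⟩`. Since
`Tr(BAρ)` is the complex conjugate of `Tr(ABρ)`, the real and imaginary parts of `Cov(A, B)` are the
anticommutator and commutator terms, and `|Cov|² = Re² + Im²` is the stated bound.
-/

open Matrix
open scoped ComplexOrder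

namespace Matrix

variable {n : Type*} [Fintype n]

section CommRing

variable {R : Type*} [CommRing R] [StarRing R]

theorem IsHermitian.isSelfAdjoint_trace_mul {A B : Matrix n n R} (hA : A.IsHermitian)
    (hB : B.IsHermitian) : IsSelfAdjoint (A * B).trace := by
  rw [IsSelfAdjoint, ← trace_conjTranspose, conjTranspose_mul, hA.eq, hB.eq, trace_mul_comm]

theorem IsHermitian.star_trace_mul_mul {A B C : Matrix n n R} (hA : A.IsHermitian)
    (hB : B.IsHermitian) (hC : C.IsHermitian) :
    star (A * B * C).trace = (B * A * C).trace := by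
  rw [← trace_conjTranspose, conjTranspose_mul, conjTranspose_mul, hA.eq, hB.eq, hC.eq,
    trace_mul_comm, mul_assoc]

end CommRing

theorem PosSemidef.norm_trace_mul_mul_conjTranspose_sq_le {ρ : Matrix n n ℂ} (hρ : ρ.PosSemidef)
    (X Y : Matrix n n ℂ) :
    ‖(Y * ρ * Xᴴ).trace‖ ^ 2 ≤ (X * ρ * Xᴴ).trace.re * (Y * ρ * Yᴴ).trace.re := by
  let := ρ.toMatrixSeminormedAddCommGroup hρ
  let := ρ.toMatrixInnerProductSpace hρ
  -- in this inner product space `⟪X, Y⟫ = (Y * ρ * Xᴴ).trace` by definition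
  have h := inner_mul_inner_self_le (𝕜 := ℂ) X Y
  rw [norm_inner_symm Y X, ← sq] at h
  exact h

def traceCovariance (ρ A B : Matrix n n ℂ) : ℂ :=
  (A * B * ρ).trace - (A * ρ).trace * (B * ρ).trace

section Covariance

variable {ρ A B : Matrix n n ℂ}

theorem traceCovariance_re (hρ : ρ.IsHermitian) (hA : A.IsHermitian) (hB : B.IsHermitian) :
    (traceCovariance ρ A B).re
      = (1 / 2 : ℝ) * ((A * B + B * A) * ρ).trace.re - (A * ρ).trace.re * (B * ρ).trace.re := by
  have ha := (Complex.im_eq_zero_iff_isSelfAdjoint _).mpr (hA.isSelfAdjoint_trace_mul hρ)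
  have hb := (Complex.im_eq_zero_iff_isSelfAdjoint _).mpr (hB.isSelfAdjoint_trace_mul hρ)
  rw [add_mul, trace_add, ← hA.star_trace_mul_mul hB hρ, Complex.star_def, Complex.add_conj]
  simp [traceCovariance, ha, hb]

theorem traceCovariance_im (hρ : ρ.IsHermitian) (hA : A.IsHermitian) (hB : B.IsHermitian) :
    (traceCovariance ρ A B).im = (((A * B - B * A) * ρ).trace / (2 * Complex.I)).re := by
  have ha := (Complex.im_eq_zero_iff_isSelfAdjoint _).mpr (hA.isSelfAdjoint_trace_mul hρ)
  have hb := (Complex.im_eq_zero_iff_isSelfAdjoint _).mpr (hB.isSelfAdjoint_trace_mul hρ)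
  rw [sub_mul, trace_sub, ← hA.star_trace_mul_mul hB hρ, Complex.star_def, Complex.sub_conj]
  field_simp
  simp [traceCovariance, ha, hb]

variable [DecidableEq n]

theorem traceCovariance_self_re (hρ : ρ.IsHermitian) (hA : A.IsHermitian) :
    (traceCovariance ρ A A).re = (ρ * A ^ 2).trace.re - (ρ * A).trace.re ^ 2 := by
  have ha := (Complex.im_eq_zero_iff_isSelfAdjoint _).mpr (hA.isSelfAdjoint_trace_mul hρ)
  rw [trace_mul_comm ρ, trace_mul_comm ρ, sq A]
  simp [traceCovariance, ha, sq]

theorem trace_sub_smul_one_mul_sub_smul_one_mul (htr : ρ.trace = 1) :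
    ((A - (A * ρ).trace • 1) * (B - (B * ρ).trace • 1) * ρ).trace = traceCovariance ρ A B := by
  simp only [traceCovariance, sub_mul, mul_sub, smul_mul_assoc, mul_smul_comm, one_mul, mul_one,
    trace_sub, trace_smul, smul_eq_mul, htr]
  ring

theorem norm_traceCovariance_sq_le (hρ : ρ.PosSemidef) (htr : ρ.trace = 1)
    (hA : A.IsHermitian) (hB : B.IsHermitian) :
    ‖traceCovariance ρ A B‖ ^ 2 ≤ (traceCovariance ρ A A).re * (traceCovariance ρ B B).re := by
  set A₀ := A - (A * ρ).trace • 1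
  set B₀ := B - (B * ρ).trace • 1
  have hA₀ : A₀ᴴ = A₀ := hA.sub ((hA.isSelfAdjoint_trace_mul hρ.1).smul (.one _))
  have hB₀ : B₀ᴴ = B₀ := hB.sub ((hB.isSelfAdjoint_trace_mul hρ.1).smul (.one _))
  have h := hρ.norm_trace_mul_mul_conjTranspose_sq_le A₀ B₀
  rwa [hA₀, hB₀, trace_mul_cycle B₀ ρ A₀, trace_mul_cycle A₀ ρ A₀, trace_mul_cycle B₀ ρ B₀,
    trace_sub_smul_one_mul_sub_smul_one_mul htr, trace_sub_smul_one_mul_sub_smul_one_mul htr,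
    trace_sub_smul_one_mul_sub_smul_one_mul htr] at h

end Covariance

end Matrix

theorem stmt6 {d : ℕ} (ρ A B : Matrix (Fin d) (Fin d) ℂ)
    (hρ : ρ.PosSemidef) (htr : ρ.trace = 1)
    (hA : A.IsHermitian) (hB : B.IsHermitian) :
    (((ρ * A ^ 2).trace).re - ((ρ * A).trace).re ^ 2) *
        (((ρ * B ^ 2).trace).re - ((ρ * B).trace).re ^ 2) ≥
      ((((A * B - B * A) * ρ).trace / (2 * Complex.I)).re) ^ 2 +
        ((1 / 2 : ℝ) * (((A * B + B * A) * ρ).trace).re -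
          ((A * ρ).trace).re * ((B * ρ).trace).re) ^ 2 := by
  rw [← traceCovariance_self_re hρ.1 hA, ← traceCovariance_self_re hρ.1 hB,
    ← traceCovariance_im hρ.1 hA hB, ← traceCovariance_re hρ.1 hA hB, add_comm, sq, sq,
    ← Complex.normSq_apply, ← Complex.sq_norm]
  exact norm_traceCovariance_sq_le hρ htr hA hB
end
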